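/- (Euler integral representation) Let α, β, γ be real numbers with 0 < β < γ, and let λ be real with |λ| < 1. Then the improper integral ∫₁^∞ x^{α−γ} (x−1)^{γ−β−1} (x−λ)^{−α} dx converges and ₂F₁(α, β; γ; λ) = (Γ(γ)/(Γ(β)Γ(γ−β))) · ∫₁^∞ x^{α−γ} (x−1)^{γ−β−1} (x−λ)^{−α} dx. -/

import Mathlib

/-!
Substituting `x = 1/t` turns the integral over `(1, ∞)` into Euler's integral
`∫₀¹ t^(β-1) (1-t)^(γ-β-1) (1-λt)^(-α) dt`. Expand `(1-λt)^(-α) = ∑ (α)_k/k! (λt)^k` by the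
binomial series; on `(0,1)` it is dominated by `∑ |(α)_k/k! λ^k|` times the Beta kernel, so it
can be integrated termwise, giving `∑ (α)_k/k! λ^k B(β+k, γ-β)`. Finally `Γ(s+k) = (s)_k Γ(s)`
gives `B(β+k, γ-β) = (β)_k/(γ)_k · B(β, γ-β)`.
-/

open Finset MeasureTheory

/-- The Pochhammer symbol `(a)_k = a(a+1)⋯(a+k−1)`. -/
noncomputable def poch (a : ℝ) (k : ℕ) : ℝ := ∏ i ∈ Finset.range k, (a + i)

/-- The Gauss hypergeometric series `₂F₁(a, b; c; t)`. -/
noncomputable def F21 (a b c t : ℝ) : ℝ :=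
  ∑' k : ℕ, poch a k * poch b k / (poch c k * (Nat.factorial k)) * t ^ k

open ProbabilityTheory

lemma poch_succ (a : ℝ) (k : ℕ) : poch a (k + 1) = poch a k * (a + k) :=
  prod_range_succ _ _

lemma poch_pos {a : ℝ} (ha : 0 < a) (k : ℕ) : 0 < poch a k :=
  prod_pos fun i _ => by positivity

lemma poch_eq_ascPochhammer_eval (a : ℝ) (k : ℕ) : poch a k = (ascPochhammer ℝ k).eval a := by
  induction k with
  | zero => simp [poch]
  | succ k ih => rw [ascPochhammer_succ_eval, ← ih, poch_succ]

lemma Real.Gamma_add_natCast_eq_poch_mul {a : ℝ} (ha : 0 < a) (k : ℕ) :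
    Real.Gamma (a + k) = poch a k * Real.Gamma a := by
  induction k with
  | zero => simp [poch]
  | succ k ih =>
    rw [Nat.cast_succ, ← add_assoc, Real.Gamma_add_one (by positivity), ih, poch_succ]
    ring

lemma ProbabilityTheory.beta_add_natCast {b c : ℝ} (hb : 0 < b) (hc : 0 < c) (k : ℕ) :
    beta (b + k) c = poch b k / poch (b + c) k * beta b c := by
  have hbc : 0 < b + c := by positivity
  have := poch_pos hbc k
  have := Real.Gamma_pos_of_pos hbc
  rw [beta, beta, add_right_comm, Real.Gamma_add_natCast_eq_poch_mul hb,
    Real.Gamma_add_natCast_eq_poch_mul hbc]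
  field_simp

lemma Ring.choose_add_natCast_sub_one (a : ℝ) (k : ℕ) :
    Ring.choose (a + k - 1) k = poch a k / k.factorial := by
  rw [← Ring.multichoose_eq, eq_div_iff (by positivity), mul_comm, ← nsmul_eq_mul,
    Ring.factorial_nsmul_multichoose_eq_ascPochhammer, poch_eq_ascPochhammer_eval,
    Polynomial.ascPochhammer_smeval_cast, Polynomial.ascPochhammer_smeval_eq_eval]

lemma mem_eball_one_of_abs_lt {u : ℝ} (hu : |u| < 1) : u ∈ Metric.eball (0 : ℝ) 1 := by
  simpa [Metric.mem_eball, edist_dist] using hu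

lemma hasSum_poch_div_factorial_mul_pow (a : ℝ) {u : ℝ} (hu : |u| < 1) :
    HasSum (fun k => poch a k / k.factorial * u ^ k) ((1 - u) ^ (-a)) := by
  have h := (Real.one_div_one_sub_rpow_hasFPowerSeriesOnBall_zero a).hasSum
    (mem_eball_one_of_abs_lt hu)
  simp only [FormalMultilinearSeries.ofScalars_apply_eq, zero_add, smul_eq_mul,
    Ring.choose_add_natCast_sub_one] at h
  rwa [Real.rpow_neg (by linarith [le_abs_self u]), ← one_div]

lemma summable_abs_poch_div_factorial_mul_pow (a : ℝ) {u : ℝ} (hu : |u| < 1) :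
    Summable (fun k => |poch a k / k.factorial * u ^ k|) := by
  have hp := Real.one_div_one_sub_rpow_hasFPowerSeriesOnBall_zero a
  have h := FormalMultilinearSeries.summable_norm_apply _
    (Metric.eball_subset_eball hp.r_le (mem_eball_one_of_abs_lt hu))
  simpa [FormalMultilinearSeries.ofScalars_apply_eq, Ring.choose_add_natCast_sub_one,
    mul_comm, abs_div] using h

lemma rpow_mul_one_sub_rpow_ofReal_eq {b c x : ℝ} (hx : x ∈ Set.Icc (0 : ℝ) 1) :
    ((x : ℂ) ^ ((b : ℂ) - 1) * (1 - (x : ℂ)) ^ ((c : ℂ) - 1)) =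
      ((x ^ (b - 1) * (1 - x) ^ (c - 1) : ℝ) : ℂ) := by
  rw [Complex.ofReal_mul, Complex.ofReal_cpow hx.1, Complex.ofReal_cpow (by linarith [hx.2])]
  push_cast
  ring

lemma integrableOn_rpow_mul_one_sub_rpow {b c : ℝ} (hb : 0 < b) (hc : 0 < c) :
    IntegrableOn (fun t : ℝ => t ^ (b - 1) * (1 - t) ^ (c - 1)) (Set.Ioo 0 1) := by
  have h := Complex.betaIntegral_convergent (u := b) (v := c) (by simpa) (by simpa)
  rw [intervalIntegrable_iff_integrableOn_Ioc_of_le zero_le_one] at h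
  refine (IntegrableOn.congr_fun h.re (fun x hx => ?_) measurableSet_Ioc).mono_set
    Set.Ioo_subset_Ioc_self
  simp only [rpow_mul_one_sub_rpow_ofReal_eq (Set.Ioc_subset_Icc_self hx), RCLike.re_to_complex,
    Complex.ofReal_re]

lemma integral_rpow_mul_one_sub_rpow {b c : ℝ} (hb : 0 < b) (hc : 0 < c) :
    ∫ t in Set.Ioo (0 : ℝ) 1, t ^ (b - 1) * (1 - t) ^ (c - 1) = beta b c := by
  have h := Complex.betaIntegral_eq_Gamma_mul_div b c (by simpa) (by simpa)
  rw [Complex.betaIntegral, intervalIntegral.integral_congr (g := fun x : ℝ =>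
      ((x ^ (b - 1) * (1 - x) ^ (c - 1) : ℝ) : ℂ))
      (fun x hx => rpow_mul_one_sub_rpow_ofReal_eq (by rwa [Set.uIcc_of_le zero_le_one] at hx)),
    intervalIntegral.integral_ofReal, ← Complex.ofReal_add, Complex.Gamma_ofReal,
    Complex.Gamma_ofReal, Complex.Gamma_ofReal] at h
  rw [← integral_Ioc_eq_integral_Ioo, ← intervalIntegral.integral_of_le zero_le_one, beta]
  exact_mod_cast h

section InvSubstitution

variable {E : Type*} [NormedAddCommGroup E] [NormedSpace ℝ E]

lemma image_inv_Ioo_zero_one : (fun x : ℝ => x⁻¹) '' Set.Ioo 0 1 = Set.Ioi 1 := by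
  rw [Set.image_inv_eq_inv, Set.inv_Ioo_0_left one_pos, inv_one]

lemma hasDerivWithinAt_inv_Ioo_zero_one {x : ℝ} (hx : x ∈ Set.Ioo (0 : ℝ) 1) :
    HasDerivWithinAt (fun x : ℝ => x⁻¹) (-(x ^ 2)⁻¹) (Set.Ioo 0 1) x :=
  (hasDerivAt_inv hx.1.ne').hasDerivWithinAt

lemma integrableOn_Ioi_one_iff_inv {f : ℝ → E} :
    IntegrableOn f (Set.Ioi 1) ↔
      IntegrableOn (fun t : ℝ => (t ^ 2)⁻¹ • f t⁻¹) (Set.Ioo 0 1) := by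
  rw [← image_inv_Ioo_zero_one, integrableOn_image_iff_integrableOn_abs_deriv_smul
    measurableSet_Ioo (fun x hx => hasDerivWithinAt_inv_Ioo_zero_one hx) inv_injective.injOn]
  refine integrableOn_congr_fun (fun t ht => ?_) measurableSet_Ioo
  rw [abs_neg, abs_of_pos (by have := ht.1; positivity)]

lemma integral_Ioi_one_eq_inv (f : ℝ → E) :
    ∫ x in Set.Ioi 1, f x = ∫ t in Set.Ioo 0 1, (t ^ 2)⁻¹ • f t⁻¹ := by
  rw [← image_inv_Ioo_zero_one, integral_image_eq_integral_abs_deriv_smul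
    measurableSet_Ioo (fun x hx => hasDerivWithinAt_inv_Ioo_zero_one hx) inv_injective.injOn]
  refine setIntegral_congr_fun measurableSet_Ioo (fun t ht => ?_)
  rw [abs_neg, abs_of_pos (by have := ht.1; positivity)]

end InvSubstitution

section EulerIntegral

noncomputable def eulerIntegrand (a b c lam t : ℝ) : ℝ :=
  t ^ (b - 1) * (1 - t) ^ (c - 1) * (1 - lam * t) ^ (-a)

variable {a b c lam : ℝ}

lemma abs_mul_lt_one_of_mem_Icc (hlam : |lam| < 1) {t : ℝ} (ht : t ∈ Set.Icc (0 : ℝ) 1) :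
    |lam * t| < 1 := by
  rw [abs_mul, abs_of_nonneg ht.1]
  nlinarith [abs_nonneg lam, ht.2]

lemma one_sub_mul_pos_of_mem_Icc (hlam : |lam| < 1) {t : ℝ} (ht : t ∈ Set.Icc (0 : ℝ) 1) :
    0 < 1 - lam * t :=
  sub_pos.2 ((le_abs_self _).trans_lt (abs_mul_lt_one_of_mem_Icc hlam ht))

lemma integrableOn_eulerIntegrand (hb : 0 < b) (hc : 0 < c) (hlam : |lam| < 1) :
    IntegrableOn (eulerIntegrand a b c lam) (Set.Ioo 0 1) := by
  have hcont : ContinuousOn (fun t : ℝ => (1 - lam * t) ^ (-a)) (Set.Icc 0 1) :=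
    (continuousOn_const.sub (continuousOn_const.mul continuousOn_id)).rpow_const
      fun t ht => Or.inl (one_sub_mul_pos_of_mem_Icc hlam ht).ne'
  exact (integrableOn_rpow_mul_one_sub_rpow hb hc).mul_continuousOn_of_subset hcont
    measurableSet_Ioo isCompact_Icc Set.Ioo_subset_Icc_self

lemma hasSum_integral_eulerIntegrand (hb : 0 < b) (hc : 0 < c) (hlam : |lam| < 1) :
    HasSum (fun k => poch a k / k.factorial * lam ^ k * beta (b + k) c)
      (∫ t in Set.Ioo 0 1, eulerIntegrand a b c lam t) := by
  set kernel : ℝ → ℝ := fun t => t ^ (b - 1) * (1 - t) ^ (c - 1)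
  set coeff : ℕ → ℝ := fun k => poch a k / k.factorial
  have hkernel_nonneg {t : ℝ} (ht : t ∈ Set.Ioo (0 : ℝ) 1) : 0 ≤ kernel t := by
    have := ht.1; have := sub_pos.2 ht.2; positivity
  have hterm (k : ℕ) : ∫ t in Set.Ioo 0 1, kernel t * (coeff k * (lam * t) ^ k) =
      coeff k * lam ^ k * beta (b + k) c := by
    rw [← integral_rpow_mul_one_sub_rpow (by positivity) hc, ← integral_const_mul]
    refine setIntegral_congr_fun measurableSet_Ioo fun t ht => ?_
    rw [add_sub_right_comm, Real.rpow_add ht.1, Real.rpow_natCast]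
    ring
  suffices HasSum (fun k => ∫ t in Set.Ioo 0 1, kernel t * (coeff k * (lam * t) ^ k))
      (∫ t in Set.Ioo 0 1, eulerIntegrand a b c lam t) by simpa only [hterm] using this
  refine hasSum_integral_of_dominated_convergence (fun k t => kernel t * |coeff k * lam ^ k|)
    (fun k => (by fun_prop : Measurable _).aestronglyMeasurable) (fun k => ?_)
    (ae_of_all _ fun t => (summable_abs_poch_div_factorial_mul_pow a hlam).mul_left _) ?_ ?_
  · refine ae_restrict_of_forall_mem measurableSet_Ioo fun t ht => ?_
    rw [Real.norm_eq_abs, abs_mul, abs_of_nonneg (hkernel_nonneg ht), mul_pow, ← mul_assoc,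
      abs_mul (coeff k * lam ^ k), abs_pow, abs_of_pos ht.1]
    exact mul_le_mul_of_nonneg_left
      (mul_le_of_le_one_right (abs_nonneg _) (pow_le_one₀ ht.1.le ht.2.le)) (hkernel_nonneg ht)
  · simp_rw [tsum_mul_left]
    exact (integrableOn_rpow_mul_one_sub_rpow hb hc).mul_const _
  · exact ae_restrict_of_forall_mem measurableSet_Ioo fun t ht =>
      (hasSum_poch_div_factorial_mul_pow a
        (abs_mul_lt_one_of_mem_Icc hlam (Set.Ioo_subset_Icc_self ht))).mul_left _

lemma inv_sq_mul_eq_eulerIntegrand (hlam : |lam| < 1) {t : ℝ} (ht : t ∈ Set.Ioo (0 : ℝ) 1) :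
    (t ^ 2)⁻¹ * (t⁻¹ ^ (a - c) * (t⁻¹ - 1) ^ (c - b - 1) * (t⁻¹ - lam) ^ (-a)) =
      eulerIntegrand a b (c - b) lam t := by
  obtain ⟨ht0, ht1⟩ := ht
  have hlt := one_sub_mul_pos_of_mem_Icc hlam ⟨ht0.le, ht1.le⟩
  have h1 : t⁻¹ - 1 = (1 - t) * t⁻¹ := by field_simp
  have h2 : t⁻¹ - lam = (1 - lam * t) * t⁻¹ := by field_simp
  have hpow (p : ℝ) : t⁻¹ ^ p = t ^ (-p) := by rw [Real.inv_rpow ht0.le, Real.rpow_neg ht0.le]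
  rw [h1, h2, Real.mul_rpow (by linarith) (by positivity), Real.mul_rpow hlt.le (by positivity),
    hpow, hpow, hpow, eulerIntegrand, ← Real.rpow_natCast, ← Real.rpow_neg ht0.le]
  have hexp : t ^ (b - 1) =
      t ^ (-((2 : ℕ) : ℝ)) * t ^ (-(a - c)) * t ^ (-(c - b - 1)) * t ^ (-(-a)) := by
    rw [← Real.rpow_add ht0, ← Real.rpow_add ht0, ← Real.rpow_add ht0]
    congr 1; push_cast; ring
  rw [hexp]
  ring

end EulerIntegral

/-- Euler integral representation: for `0 < β < γ` and `|λ| < 1`, the integral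
`∫₁^∞ x^{α−γ}(x−1)^{γ−β−1}(x−λ)^{−α} dx` converges and equals
`(Γ(β)Γ(γ−β)/Γ(γ)) · ₂F₁(α, β; γ; λ)`. -/
theorem euler_integral_representation (α β γ lam : ℝ)
    (hβ : 0 < β) (hβγ : β < γ) (hlam : |lam| < 1) :
    IntegrableOn
        (fun x : ℝ => x ^ (α - γ) * (x - 1) ^ (γ - β - 1) * (x - lam) ^ (-α)) (Set.Ioi 1) ∧
      F21 α β γ lam =
        (Real.Gamma γ / (Real.Gamma β * Real.Gamma (γ - β))) *
          ∫ x in Set.Ioi (1 : ℝ),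
            x ^ (α - γ) * (x - 1) ^ (γ - β - 1) * (x - lam) ^ (-α) := by
  have hγβ : 0 < γ - β := sub_pos.2 hβγ
  have hsubst : Set.EqOn (fun t : ℝ => (t ^ 2)⁻¹ •
      (t⁻¹ ^ (α - γ) * (t⁻¹ - 1) ^ (γ - β - 1) * (t⁻¹ - lam) ^ (-α)))
      (eulerIntegrand α β (γ - β) lam) (Set.Ioo 0 1) :=
    fun t ht => inv_sq_mul_eq_eulerIntegrand hlam ht
  refine ⟨integrableOn_Ioi_one_iff_inv.2
    ((integrableOn_eulerIntegrand hβ hγβ hlam).congr_fun hsubst.symm measurableSet_Ioo), ?_⟩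
  rw [integral_Ioi_one_eq_inv, setIntegral_congr_fun measurableSet_Ioo hsubst,
    ← (hasSum_integral_eulerIntegrand hβ hγβ hlam).tsum_eq, ← tsum_mul_left, F21]
  have hnorm : Real.Gamma γ / (Real.Gamma β * Real.Gamma (γ - β)) =
      (beta β (γ - β))⁻¹ := by
    rw [beta, add_sub_cancel, inv_div]
  refine tsum_congr fun k => ?_
  have := poch_pos (hβ.trans hβγ) k
  have := beta_pos hβ hγβ
  rw [hnorm, beta_add_natCast hβ hγβ, add_sub_cancel]
  field_simp
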